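/- arXiv:1709.09031 — 5 statements merged into one kernel-verified Lean document; each statement's English description precedes it below -/
import Mathlib

section
/- Let A and Ã be nonsingular n×n real matrices, W a symmetric positive definite n×n matrix, and A_p = (Ã⁻¹ W Ã⁻ᵀ)(Aᵀ W⁻¹ A). Then every eigenvalue λ of A_p satisfies |λ − 1| ≤ (1 + κ₂(W))‖E‖₂ + κ₂(W)‖E‖₂², where E = AÃ⁻¹ − I and κ₂(W) = ‖W‖₂‖W⁻¹‖₂. -/
/-!
With `E = A Ã⁻¹ - I` we have `A = (I + E) Ã`, hence `A_p = Ã⁻¹ (W (I + E)ᵀ W⁻¹ (I + E)) Ã` is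
similar to `I + F` with `F = E + W Eᵀ W⁻¹ + W Eᵀ W⁻¹ E`. So `λ - 1` is a complex eigenvalue of the
real matrix `F` and `|λ - 1| ≤ ‖F‖₂`: complexifying does not increase the spectral norm, since
`‖F x‖² = ‖F (Re x)‖² + ‖F (Im x)‖²`. Finally `‖F‖₂` is bounded by submultiplicativity and
`‖Eᵀ‖₂ = ‖E‖₂`.
-/

open Matrix

noncomputable def specNorm {m : Type*} [Fintype m] [DecidableEq m]
    (A : Matrix m m ℝ) : ℝ :=
  ‖LinearMap.toContinuousLinearMap (Matrix.toEuclideanLin A)‖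

open scoped Matrix.Norms.L2Operator

lemma specNorm_eq_l2_opNorm {m : Type*} [Fintype m] [DecidableEq m] (A : Matrix m m ℝ) :
    specNorm A = ‖A‖ :=
  rfl

namespace Matrix

section Complexification

variable {m n : Type*} [Fintype n]

lemma re_mulVec_map_ofReal (F : Matrix m n ℝ) (x : n → ℂ) (i : m) :
    ((F.map (algebraMap ℝ ℂ) *ᵥ x) i).re = (F *ᵥ fun j => (x j).re) i := by
  simp [mulVec, dotProduct, Complex.re_sum]

lemma im_mulVec_map_ofReal (F : Matrix m n ℝ) (x : n → ℂ) (i : m) :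
    ((F.map (algebraMap ℝ ℂ) *ᵥ x) i).im = (F *ᵥ fun j => (x j).im) i := by
  simp [mulVec, dotProduct, Complex.im_sum]

lemma _root_.EuclideanSpace.norm_sq_eq_re_add_im (x : n → ℂ) :
    ‖WithLp.toLp 2 x‖ ^ 2 =
      ‖WithLp.toLp 2 fun i => (x i).re‖ ^ 2 + ‖WithLp.toLp 2 fun i => (x i).im‖ ^ 2 := by
  rw [EuclideanSpace.norm_sq_eq, EuclideanSpace.norm_sq_eq, EuclideanSpace.norm_sq_eq,
    ← Finset.sum_add_distrib]
  refine Finset.sum_congr rfl fun i _ => ?_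
  simp only [Real.norm_eq_abs, sq_abs, Complex.sq_norm, Complex.normSq_apply]
  ring

lemma l2_opNorm_map_ofReal_le [Fintype m] [DecidableEq n] (F : Matrix m n ℝ) :
    ‖F.map (algebraMap ℝ ℂ)‖ ≤ ‖F‖ := by
  rw [l2_opNorm_def]
  refine ContinuousLinearMap.opNorm_le_bound _ (norm_nonneg F) fun x => ?_
  refine (sq_le_sq₀ (norm_nonneg _) (by positivity)).mp ?_
  have hre := F.l2_opNorm_mulVec (WithLp.toLp 2 fun j => (x j).re)
  have him := F.l2_opNorm_mulVec (WithLp.toLp 2 fun j => (x j).im)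
  have hx : ‖x‖ ^ 2 = ‖WithLp.toLp 2 fun j => (x j).re‖ ^ 2 +
      ‖WithLp.toLp 2 fun j => (x j).im‖ ^ 2 := by
    rw [← EuclideanSpace.norm_sq_eq_re_add_im, WithLp.toLp_ofLp]
  simp only [LinearEquiv.trans_apply, LinearMap.coe_toContinuousLinearMap', toLpLin_apply]
  rw [EuclideanSpace.norm_sq_eq_re_add_im]
  simp only [re_mulVec_map_ofReal, im_mulVec_map_ofReal]
  calc _ ≤ (‖F‖ * ‖WithLp.toLp 2 fun j => (x j).re‖) ^ 2 +
        (‖F‖ * ‖WithLp.toLp 2 fun j => (x j).im‖) ^ 2 := by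
        gcongr
        exacts [hre, him]
    _ = (‖F‖ * ‖x‖) ^ 2 := by rw [mul_pow ‖F‖ ‖x‖, hx]; ring

end Complexification

variable {m : Type*} [Fintype m] [DecidableEq m]

lemma l2_opNorm_one_le : ‖(1 : Matrix m m ℂ)‖ ≤ 1 := by
  rw [cstar_norm_def, map_one]
  exact ContinuousLinearMap.norm_id_le

lemma norm_le_l2_opNorm_of_mem_spectrum_map {F : Matrix m m ℝ} {μ : ℂ}
    (hμ : μ ∈ spectrum ℂ (F.map (algebraMap ℝ ℂ))) : ‖μ‖ ≤ ‖F‖ :=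
  calc ‖μ‖ ≤ ‖F.map (algebraMap ℝ ℂ)‖ * ‖(1 : Matrix m m ℂ)‖ :=
        spectrum.norm_le_norm_mul_of_mem hμ
    _ ≤ ‖F‖ * 1 := by gcongr; exacts [l2_opNorm_map_ofReal_le F, l2_opNorm_one_le]
    _ = ‖F‖ := mul_one _

lemma sub_one_mem_spectrum_map_of_mem_conj {P F : Matrix m m ℝ} (hP : IsUnit P) {μ : ℂ}
    (hμ : μ ∈ spectrum ℂ ((P⁻¹ * (1 + F) * P).map (algebraMap ℝ ℂ))) :
    μ - 1 ∈ spectrum ℂ (F.map (algebraMap ℝ ℂ)) := by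
  obtain ⟨u, rfl⟩ := hP
  set φ := (algebraMap ℝ ℂ).mapMatrix (m := m)
  have hconj : (((u⁻¹ : (Matrix m m ℝ)ˣ) : Matrix m m ℝ) * (1 + F) * u).map (algebraMap ℝ ℂ) =
      ((Units.map φ.toMonoidHom u)⁻¹ : (Matrix m m ℂ)ˣ) * (1 + φ F) *
        Units.map φ.toMonoidHom u := by
    change φ _ = _
    simp only [map_mul, map_add, map_one, Units.coe_map, Units.coe_map_inv,
      RingHom.toMonoidHom_eq_coe, MonoidHom.coe_coe]
  rw [← coe_units_inv, hconj, spectrum.units_conjugate', ← map_one (algebraMap ℂ _),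
    ← spectrum.singleton_add_eq, Set.singleton_add] at hμ
  obtain ⟨s, hs, rfl⟩ := hμ
  rwa [add_sub_cancel_left]

lemma l2_opNorm_transpose (A : Matrix m m ℝ) : ‖Aᵀ‖ = ‖A‖ := by
  rw [← conjTranspose_eq_transpose_of_trivial, l2_opNorm_conjTranspose]

lemma l2_opNorm_perturbation_le (W V E : Matrix m m ℝ) :
    ‖E + W * Eᵀ * V + W * Eᵀ * V * E‖ ≤
      (1 + ‖W‖ * ‖V‖) * ‖E‖ + ‖W‖ * ‖V‖ * ‖E‖ ^ 2 := by
  have hWEV : ‖W * Eᵀ * V‖ ≤ ‖W‖ * ‖V‖ * ‖E‖ :=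
    calc ‖W * Eᵀ * V‖ ≤ ‖W‖ * ‖Eᵀ‖ * ‖V‖ := norm_mul₃_le
      _ = ‖W‖ * ‖V‖ * ‖E‖ := by rw [l2_opNorm_transpose]; ring
  calc ‖E + W * Eᵀ * V + W * Eᵀ * V * E‖
      ≤ ‖E‖ + ‖W * Eᵀ * V‖ + ‖W * Eᵀ * V‖ * ‖E‖ :=
        norm_add₃_le.trans (by gcongr; exact norm_mul_le _ _)
    _ ≤ ‖E‖ + ‖W‖ * ‖V‖ * ‖E‖ + ‖W‖ * ‖V‖ * ‖E‖ * ‖E‖ := by gcongr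
    _ = (1 + ‖W‖ * ‖V‖) * ‖E‖ + ‖W‖ * ‖V‖ * ‖E‖ ^ 2 := by ring

end Matrix

lemma precond_eq_conj_one_add {R m : Type*} [CommRing R] [Fintype m] [DecidableEq m]
    {A P W E : Matrix m m R} (hP : IsUnit P) (hW : IsUnit W)
    (hE : E = A * P⁻¹ - 1) :
    P⁻¹ * W * P⁻¹ᵀ * (Aᵀ * W⁻¹ * A) =
      P⁻¹ * (1 + (E + W * Eᵀ * W⁻¹ + W * Eᵀ * W⁻¹ * E)) * P := by
  rw [isUnit_iff_isUnit_det] at hP hW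
  have hA : A = (1 + E) * P := by
    rw [hE, add_sub_cancel, nonsing_inv_mul_cancel_right P A hP]
  have hPt : P⁻¹ᵀ * Pᵀ = 1 := by rw [← transpose_mul, mul_nonsing_inv _ hP, transpose_one]
  have hmid :
      W * (1 + E)ᵀ * W⁻¹ * (1 + E) = 1 + (E + W * Eᵀ * W⁻¹ + W * Eᵀ * W⁻¹ * E) := by
    simp only [transpose_add, transpose_one, mul_add, add_mul, mul_one, one_mul,
      mul_nonsing_inv W hW]
    abel
  rw [hA, transpose_mul]
  calc P⁻¹ * W * P⁻¹ᵀ * (Pᵀ * (1 + E)ᵀ * W⁻¹ * ((1 + E) * P))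
      = P⁻¹ * (W * (P⁻¹ᵀ * Pᵀ) * (1 + E)ᵀ * W⁻¹ * (1 + E)) * P := by noncomm_ring
    _ = P⁻¹ * (1 + (E + W * Eᵀ * W⁻¹ + W * Eᵀ * W⁻¹ * E)) * P := by rw [hPt, mul_one, hmid]

theorem stmt0_general {n : ℕ} (A Atil W : Matrix (Fin n) (Fin n) ℝ)
    (hAtil : IsUnit Atil) (hW : W.PosDef)
    (Ap : Matrix (Fin n) (Fin n) ℝ)
    (hAp : Ap = (Atil⁻¹ * W * (Atil⁻¹)ᵀ) * (Aᵀ * W⁻¹ * A))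
    (E : Matrix (Fin n) (Fin n) ℝ) (hE : E = A * Atil⁻¹ - 1)
    (κ : ℝ) (hκ : κ = specNorm W * specNorm W⁻¹)
    (lam : ℂ) (hlam : lam ∈ spectrum ℂ (Ap.map (algebraMap ℝ ℂ))) :
    ‖lam - 1‖ ≤ (1 + κ) * specNorm E + κ * specNorm E ^ 2 := by
  rw [hAp, precond_eq_conj_one_add hAtil hW.isUnit hE] at hlam
  calc ‖lam - 1‖ ≤ ‖E + W * Eᵀ * W⁻¹ + W * Eᵀ * W⁻¹ * E‖ :=
        norm_le_l2_opNorm_of_mem_spectrum_map (sub_one_mem_spectrum_map_of_mem_conj hAtil hlam)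
    _ ≤ (1 + ‖W‖ * ‖W⁻¹‖) * ‖E‖ + ‖W‖ * ‖W⁻¹‖ * ‖E‖ ^ 2 := l2_opNorm_perturbation_le W W⁻¹ E
    _ = (1 + κ) * specNorm E + κ * specNorm E ^ 2 := by simp only [hκ, specNorm_eq_l2_opNorm]

/-- every (complex) eigenvalue `λ` of
`A_p = (Ã⁻¹ W Ã⁻ᵀ)(Aᵀ W⁻¹ A)` satisfies
`|λ − 1| ≤ (1 + κ₂(W))‖E‖₂ + κ₂(W)‖E‖₂²` where `E = AÃ⁻¹ − I`. -/
theorem stmt0 {n : ℕ} (A Atil W : Matrix (Fin n) (Fin n) ℝ)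
    (hA : IsUnit A) (hAtil : IsUnit Atil) (hW : W.PosDef)
    (Ap : Matrix (Fin n) (Fin n) ℝ)
    (hAp : Ap = (Atil⁻¹ * W * (Atil⁻¹)ᵀ) * (Aᵀ * W⁻¹ * A))
    (E : Matrix (Fin n) (Fin n) ℝ) (hE : E = A * Atil⁻¹ - 1)
    (κ : ℝ) (hκ : κ = specNorm W * specNorm W⁻¹)
    (lam : ℂ) (hlam : lam ∈ spectrum ℂ (Ap.map (algebraMap ℝ ℂ))) :
    ‖lam - 1‖ ≤ (1 + κ) * specNorm E + κ * specNorm E ^ 2 :=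
  stmt0_general A Atil W hAtil hW Ap hAp E hE κ hκ lam hlam
end

section
/- Let A, Ã be nonsingular n×n real matrices, W symmetric positive definite, E = AÃ⁻¹ − I, κ = κ₂(W). Assume ‖E‖₂ < (−(1+κ) + √((1+κ)² + 4κ)) / (2κ). Then κ(AᵀW⁻¹A, ÃᵀW⁻¹Ã) ≤ (1 + (1+κ)‖E‖₂ + κ‖E‖₂²) / (1 − (1+κ)‖E‖₂ − κ‖E‖₂²). -/
/-! Write `A = (1 + E) Ã` and `z = Ã y`, and measure vectors in the inner product given by `W⁻¹`.
Then `yᵀ (AᵀW⁻¹A) y - yᵀ (ÃᵀW⁻¹Ã) y = 2⟪z, Ez⟫ + ⟪Ez, Ez⟫`. Comparing the `W⁻¹`-norm with the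
Euclidean one costs the factors `‖W‖` and `‖W⁻¹‖`, so `⟪Ez, Ez⟫ ≤ κ ‖E‖² ⟪z, z⟫`, and with
Cauchy–Schwarz and `2√κ ≤ 1 + κ` the Rayleigh quotient of the pencil lies within
`δ = (1 + κ)‖E‖ + κ‖E‖²` of `1`. Hence so does every eigenvalue of `(ÃᵀW⁻¹Ã)⁻¹ AᵀW⁻¹A`, and the
smallness condition on `‖E‖` says exactly that `δ < 1`. -/

open Matrix

lemma abs_two_mul_add_le {a b c κ ε : ℝ} (hκ : 0 ≤ κ) (hε : 0 ≤ ε) (ha : 0 ≤ a) (hc0 : 0 ≤ c)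
    (hb : b ^ 2 ≤ a * c) (hc : c ≤ κ * ε ^ 2 * a) :
    |2 * b + c| ≤ ((1 + κ) * ε + κ * ε ^ 2) * a := by
  have h2b : |2 * b| ≤ (1 + κ) * ε * a := by
    refine abs_le_of_sq_le_sq ?_ (by positivity)
    nlinarith [mul_le_mul_of_nonneg_left hc ha, mul_nonneg (sq_nonneg (1 - κ)) (sq_nonneg (ε * a))]
  calc |2 * b + c| ≤ |2 * b| + c := (abs_add_le _ _).trans_eq (by rw [abs_of_nonneg hc0])
    _ ≤ ((1 + κ) * ε + κ * ε ^ 2) * a := by nlinarith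

/-- The bound on `ε` is the positive root of `κ x² + (1 + κ) x - 1`; for `κ = 0` it is the junk
value `x / 0 = 0`, and no `ε ≥ 0` satisfies `h`. -/
lemma one_add_mul_add_mul_sq_lt_one {κ ε : ℝ} (hκ : 0 ≤ κ) (hε : 0 ≤ ε)
    (h : ε < (-(1 + κ) + √((1 + κ) ^ 2 + 4 * κ)) / (2 * κ)) :
    (1 + κ) * ε + κ * ε ^ 2 < 1 := by
  rcases hκ.eq_or_lt with rfl | hκ
  · simp only [add_zero, mul_zero, div_zero] at h
    linarith
  rw [lt_div_iff₀ (by positivity), lt_neg_add_iff_add_lt] at h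
  have h' := pow_lt_pow_left₀ h (by positivity) two_ne_zero
  rw [Real.sq_sqrt (by positivity)] at h'
  nlinarith

lemma sSup_div_sInf_le_of_forall_abs_sub_one_le {s : Set ℝ} {δ : ℝ} (hδ0 : 0 ≤ δ) (hδ1 : δ < 1)
    (hs : ∀ μ ∈ s, |μ - 1| ≤ δ) : sSup s / sInf s ≤ (1 + δ) / (1 - δ) := by
  rcases s.eq_empty_or_nonempty with rfl | hne
  · rw [Real.sSup_empty, zero_div]
    exact div_nonneg (by linarith) (by linarith)
  refine div_le_div₀ (by linarith) (csSup_le hne fun μ hμ => ?_) (by linarith)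
    (le_csInf hne fun μ hμ => ?_)
  · linarith [(abs_le.mp (hs μ hμ)).2]
  · linarith [(abs_le.mp (hs μ hμ)).1]

lemma EuclideanSpace.norm_toLp_sq {ι : Type*} [Fintype ι] (x : ι → ℝ) :
    ‖WithLp.toLp 2 x‖ ^ 2 = x ⬝ᵥ x := by
  rw [← real_inner_self_eq_norm_sq, EuclideanSpace.inner_toLp_toLp, star_trivial]

namespace Matrix

variable {ι : Type*} [Fintype ι]

lemma IsHermitian.dotProduct_mulVec_comm {S : Matrix ι ι ℝ} (hS : S.IsHermitian)
    (x y : ι → ℝ) : x ⬝ᵥ (S *ᵥ y) = y ⬝ᵥ (S *ᵥ x) := by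
  rw [dotProduct_mulVec, ← mulVec_transpose, dotProduct_comm,
    ← conjTranspose_eq_transpose_of_trivial, hS.eq]

lemma PosSemidef.dotProduct_mulVec_sq_le {S : Matrix ι ι ℝ} (hS : S.PosSemidef) (x y : ι → ℝ) :
    (x ⬝ᵥ (S *ᵥ y)) ^ 2 ≤ (x ⬝ᵥ (S *ᵥ x)) * (y ⬝ᵥ (S *ᵥ y)) := by
  have hquad : ∀ t : ℝ, 0 ≤ (y ⬝ᵥ (S *ᵥ y)) * (t * t) + 2 * (x ⬝ᵥ (S *ᵥ y)) * t +
      x ⬝ᵥ (S *ᵥ x) := fun t => by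
    have h := hS.dotProduct_mulVec_nonneg (x + t • y)
    simp only [star_trivial, mulVec_add, mulVec_smul, dotProduct_add, add_dotProduct,
      dotProduct_smul, smul_dotProduct, smul_eq_mul, hS.isHermitian.dotProduct_mulVec_comm y x]
      at h
    linarith
  have h := discrim_le_zero hquad
  rw [discrim] at h
  linarith

lemma dotProduct_mulVec_transpose_mul_mul (M S : Matrix ι ι ℝ) (y : ι → ℝ) :
    y ⬝ᵥ ((Mᵀ * S * M) *ᵥ y) = (M *ᵥ y) ⬝ᵥ (S *ᵥ (M *ᵥ y)) := by
  rw [← mulVec_mulVec, ← mulVec_mulVec, dotProduct_mulVec, vecMul_transpose]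

variable [DecidableEq ι]

lemma norm_toLp_mulVec_le (A : Matrix ι ι ℝ) (x : ι → ℝ) :
    ‖WithLp.toLp 2 (A *ᵥ x)‖ ≤ specNorm A * ‖WithLp.toLp 2 x‖ :=
  (LinearMap.toContinuousLinearMap (toEuclideanLin A)).le_opNorm (WithLp.toLp 2 x)

lemma mulVec_dotProduct_mulVec_self_le (A : Matrix ι ι ℝ) (x : ι → ℝ) :
    (A *ᵥ x) ⬝ᵥ (A *ᵥ x) ≤ specNorm A ^ 2 * (x ⬝ᵥ x) := by
  rw [← EuclideanSpace.norm_toLp_sq, ← EuclideanSpace.norm_toLp_sq, ← mul_pow]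
  exact pow_le_pow_left₀ (norm_nonneg _) (norm_toLp_mulVec_le A x) 2

lemma dotProduct_mulVec_self_le (A : Matrix ι ι ℝ) (x : ι → ℝ) :
    x ⬝ᵥ (A *ᵥ x) ≤ specNorm A * (x ⬝ᵥ x) := by
  calc x ⬝ᵥ (A *ᵥ x) = inner ℝ (WithLp.toLp 2 (A *ᵥ x)) (WithLp.toLp 2 x) := by
        rw [EuclideanSpace.inner_toLp_toLp, star_trivial]
    _ ≤ ‖WithLp.toLp 2 (A *ᵥ x)‖ * ‖WithLp.toLp 2 x‖ := real_inner_le_norm _ _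
    _ ≤ specNorm A * ‖WithLp.toLp 2 x‖ * ‖WithLp.toLp 2 x‖ := by
        gcongr; exact norm_toLp_mulVec_le A x
    _ = specNorm A * (x ⬝ᵥ x) := by rw [mul_assoc, ← sq, EuclideanSpace.norm_toLp_sq]

lemma PosSemidef.mulVec_dotProduct_mulVec_self_le {S : Matrix ι ι ℝ} (hS : S.PosSemidef)
    (x : ι → ℝ) : (S *ᵥ x) ⬝ᵥ (S *ᵥ x) ≤ specNorm S * (x ⬝ᵥ (S *ᵥ x)) := by
  -- Cauchy–Schwarz for the form of `S`, applied to `x` and `S x`.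
  have hcs := hS.dotProduct_mulVec_sq_le x (S *ᵥ x)
  rw [hS.isHermitian.dotProduct_mulVec_comm x] at hcs
  have hnorm := dotProduct_mulVec_self_le S (S *ᵥ x)
  have hX : 0 ≤ (S *ᵥ x) ⬝ᵥ (S *ᵥ x) := by
    simpa using dotProduct_star_self_nonneg (S *ᵥ x)
  have hx := hS.dotProduct_mulVec_nonneg x
  rw [star_trivial] at hx
  have hS0 : 0 ≤ specNorm S := norm_nonneg _
  nlinarith [mul_le_mul_of_nonneg_left hnorm hx, mul_nonneg hx hS0]

lemma PosDef.dotProduct_self_le {W : Matrix ι ι ℝ} (hW : W.PosDef) (z : ι → ℝ) :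
    z ⬝ᵥ z ≤ specNorm W * (z ⬝ᵥ (W⁻¹ *ᵥ z)) := by
  have hz : W *ᵥ (W⁻¹ *ᵥ z) = z := by
    rw [mulVec_mulVec, mul_nonsing_inv _ ((isUnit_iff_isUnit_det W).mp hW.isUnit), one_mulVec]
  have h := hW.posSemidef.mulVec_dotProduct_mulVec_self_le (W⁻¹ *ᵥ z)
  rwa [hz, dotProduct_comm (W⁻¹ *ᵥ z)] at h

lemma PosDef.mulVec_dotProduct_inv_mulVec_le {W : Matrix ι ι ℝ} (hW : W.PosDef)
    (E : Matrix ι ι ℝ) (z : ι → ℝ) :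
    (E *ᵥ z) ⬝ᵥ (W⁻¹ *ᵥ (E *ᵥ z)) ≤
      specNorm W * specNorm W⁻¹ * specNorm E ^ 2 * (z ⬝ᵥ (W⁻¹ *ᵥ z)) := by
  have hWinv : 0 ≤ specNorm W⁻¹ := norm_nonneg _
  calc (E *ᵥ z) ⬝ᵥ (W⁻¹ *ᵥ (E *ᵥ z)) ≤ specNorm W⁻¹ * ((E *ᵥ z) ⬝ᵥ (E *ᵥ z)) :=
        dotProduct_mulVec_self_le _ _
    _ ≤ specNorm W⁻¹ * (specNorm E ^ 2 * (z ⬝ᵥ z)) := by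
        gcongr; exact mulVec_dotProduct_mulVec_self_le E z
    _ ≤ specNorm W⁻¹ * (specNorm E ^ 2 * (specNorm W * (z ⬝ᵥ (W⁻¹ *ᵥ z)))) := by
        gcongr; exact hW.dotProduct_self_le z
    _ = _ := by ring

lemma PosDef.abs_one_add_mulVec_quadForm_sub_le {W : Matrix ι ι ℝ} (hW : W.PosDef)
    (E : Matrix ι ι ℝ) (z : ι → ℝ) :
    |((1 + E) *ᵥ z) ⬝ᵥ (W⁻¹ *ᵥ ((1 + E) *ᵥ z)) - z ⬝ᵥ (W⁻¹ *ᵥ z)| ≤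
      ((1 + specNorm W * specNorm W⁻¹) * specNorm E +
        specNorm W * specNorm W⁻¹ * specNorm E ^ 2) * (z ⬝ᵥ (W⁻¹ *ᵥ z)) := by
  have hS := hW.inv.posSemidef
  have hexpand : ((1 + E) *ᵥ z) ⬝ᵥ (W⁻¹ *ᵥ ((1 + E) *ᵥ z)) - z ⬝ᵥ (W⁻¹ *ᵥ z) =
      2 * (z ⬝ᵥ (W⁻¹ *ᵥ (E *ᵥ z))) + (E *ᵥ z) ⬝ᵥ (W⁻¹ *ᵥ (E *ᵥ z)) := by
    rw [add_mulVec, one_mulVec, mulVec_add, dotProduct_add, add_dotProduct, add_dotProduct,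
      hS.isHermitian.dotProduct_mulVec_comm (E *ᵥ z) z]
    ring
  have hz := hS.dotProduct_mulVec_nonneg z
  have hw := hS.dotProduct_mulVec_nonneg (E *ᵥ z)
  rw [star_trivial] at hz hw
  rw [hexpand]
  exact abs_two_mul_add_le (mul_nonneg (norm_nonneg _) (norm_nonneg _)) (norm_nonneg _) hz hw
    (hS.dotProduct_mulVec_sq_le z (E *ᵥ z)) (hW.mulVec_dotProduct_inv_mulVec_le E z)

lemma PosDef.abs_sub_one_le_of_mem_spectrum_inv_mul {C D : Matrix ι ι ℝ} (hC : C.PosDef)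
    {δ : ℝ} (hCD : ∀ y, |y ⬝ᵥ (D *ᵥ y) - y ⬝ᵥ (C *ᵥ y)| ≤ δ * (y ⬝ᵥ (C *ᵥ y)))
    {μ : ℝ} (hμ : μ ∈ spectrum ℝ (C⁻¹ * D)) : |μ - 1| ≤ δ := by
  rw [← spectrum_toLin', ← Module.End.hasEigenvalue_iff_mem_spectrum] at hμ
  obtain ⟨v, hv⟩ := hμ.exists_hasEigenvector
  have hDv : D *ᵥ v = μ • (C *ᵥ v) := by
    have h := congrArg (C *ᵥ ·) hv.apply_eq_smul
    simpa only [toLin'_apply, mulVec_mulVec, ← mul_assoc,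
      mul_nonsing_inv _ ((isUnit_iff_isUnit_det C).mp hC.isUnit), one_mul, mulVec_smul] using h
  have hpos := hC.dotProduct_mulVec_pos hv.2
  rw [star_trivial] at hpos
  have h := hCD v
  rw [hDv, dotProduct_smul, smul_eq_mul, ← sub_one_mul, abs_mul, abs_of_pos hpos] at h
  exact le_of_mul_le_mul_right h hpos

end Matrix

theorem stmt6_general {n : ℕ} (A Atil W : Matrix (Fin n) (Fin n) ℝ)
    (hAtil : IsUnit Atil) (hW : W.PosDef)
    (E : Matrix (Fin n) (Fin n) ℝ) (hE : E = A * Atil⁻¹ - 1)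
    (κ : ℝ) (hκ : κ = specNorm W * specNorm W⁻¹)
    (hsmall : specNorm E <
      (-(1 + κ) + Real.sqrt ((1 + κ) ^ 2 + 4 * κ)) / (2 * κ)) :
    sSup (spectrum ℝ ((Atilᵀ * W⁻¹ * Atil)⁻¹ * (Aᵀ * W⁻¹ * A))) /
        sInf (spectrum ℝ ((Atilᵀ * W⁻¹ * Atil)⁻¹ * (Aᵀ * W⁻¹ * A))) ≤
      (1 + (1 + κ) * specNorm E + κ * specNorm E ^ 2) /
        (1 - (1 + κ) * specNorm E - κ * specNorm E ^ 2) := by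
  subst hκ
  have hκ0 : 0 ≤ specNorm W * specNorm W⁻¹ := mul_nonneg (norm_nonneg _) (norm_nonneg _)
  have hε0 : 0 ≤ specNorm E := norm_nonneg _
  have hA : A = (1 + E) * Atil := by
    rw [hE, add_sub_cancel, nonsing_inv_mul_cancel_right _ _ ((isUnit_iff_isUnit_det _).mp hAtil)]
  have hC : (Atilᵀ * W⁻¹ * Atil).PosDef := by
    simpa only [conjTranspose_eq_transpose_of_trivial] using
      hW.inv.conjTranspose_mul_mul_same (mulVec_injective_of_isUnit hAtil)
  have hCD : ∀ y, |y ⬝ᵥ ((Aᵀ * W⁻¹ * A) *ᵥ y) - y ⬝ᵥ ((Atilᵀ * W⁻¹ * Atil) *ᵥ y)| ≤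
      ((1 + specNorm W * specNorm W⁻¹) * specNorm E +
        specNorm W * specNorm W⁻¹ * specNorm E ^ 2) * (y ⬝ᵥ ((Atilᵀ * W⁻¹ * Atil) *ᵥ y)) := by
    intro y
    rw [dotProduct_mulVec_transpose_mul_mul, dotProduct_mulVec_transpose_mul_mul, hA,
      ← mulVec_mulVec]
    exact hW.abs_one_add_mulVec_quadForm_sub_le E (Atil *ᵥ y)
  have h := sSup_div_sInf_le_of_forall_abs_sub_one_le (by positivity)
    (one_add_mul_add_mul_sq_lt_one hκ0 hε0 hsmall)
    fun μ hμ => hC.abs_sub_one_le_of_mem_spectrum_inv_mul hCD hμ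
  convert h using 2 <;> ring

/-- under the smallness condition on `‖E‖₂`,
`κ(AᵀW⁻¹A, ÃᵀW⁻¹Ã) ≤ (1 + (1+κ)‖E‖₂ + κ‖E‖₂²)/(1 − (1+κ)‖E‖₂ − κ‖E‖₂²)`,
where `κ(D, C) = λ_max(C⁻¹D)/λ_min(C⁻¹D)` and `κ = κ₂(W)`. -/
theorem stmt6 {n : ℕ} (A Atil W : Matrix (Fin n) (Fin n) ℝ)
    (hA : IsUnit A) (hAtil : IsUnit Atil) (hW : W.PosDef)
    (E : Matrix (Fin n) (Fin n) ℝ) (hE : E = A * Atil⁻¹ - 1)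
    (κ : ℝ) (hκ : κ = specNorm W * specNorm W⁻¹)
    (hsmall : specNorm E <
      (-(1 + κ) + Real.sqrt ((1 + κ) ^ 2 + 4 * κ)) / (2 * κ)) :
    sSup (spectrum ℝ ((Atilᵀ * W⁻¹ * Atil)⁻¹ * (Aᵀ * W⁻¹ * A))) /
        sInf (spectrum ℝ ((Atilᵀ * W⁻¹ * Atil)⁻¹ * (Aᵀ * W⁻¹ * A))) ≤
      (1 + (1 + κ) * specNorm E + κ * specNorm E ^ 2) /
        (1 - (1 + κ) * specNorm E - κ * specNorm E ^ 2) :=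
  stmt6_general A Atil W hAtil hW E hE κ hκ hsmall
end

section
/- For α ≥ 1, let A = [[1, 0], [α, 1]], W = diag(α, 1), and Ã = [[1, 0], [α+2, 1]]. Then A_p = (Ã⁻¹ W Ã⁻ᵀ)(Aᵀ W⁻¹ A) equals [[1 − 2α², −2α], [2α³ + 4α² − 2, 2α² + 4α + 1]], and its eigenvalues are 1 + 2α ± 2√(α(α+1)). -/
open Matrix

/-- for `α ≥ 1`, with `A = [[1,0],[α,1]]`, `W = diag(α,1)` and
`Ã = [[1,0],[α+2,1]]`, the preconditioned matrix
`A_p = (Ã⁻¹ W Ã⁻ᵀ)(Aᵀ W⁻¹ A)` equals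
`[[1 − 2α², −2α],[2α³ + 4α² − 2, 2α² + 4α + 1]]` and its eigenvalues are
`1 + 2α ± 2√(α(α+1))`. -/
theorem stmt10 (α : ℝ) (hα : 1 ≤ α)
    (A W Atil Ap : Matrix (Fin 2) (Fin 2) ℝ)
    (hA : A = !![1, 0; α, 1])
    (hW : W = !![α, 0; 0, 1])
    (hAtil : Atil = !![1, 0; α + 2, 1])
    (hAp : Ap = (Atil⁻¹ * W * (Atil⁻¹)ᵀ) * (Aᵀ * W⁻¹ * A)) :
    Ap = !![1 - 2 * α ^ 2, -2 * α;
            2 * α ^ 3 + 4 * α ^ 2 - 2, 2 * α ^ 2 + 4 * α + 1] ∧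
    spectrum ℝ Ap =
      {1 + 2 * α + 2 * Real.sqrt (α * (α + 1)),
       1 + 2 * α - 2 * Real.sqrt (α * (α + 1))} := by
  have hα0 : (0:ℝ) < α := by linarith
  have hAtinv : Atil⁻¹ = !![1, 0; -(α + 2), 1] := by
    rw [hAtil]
    rw [Matrix.inv_def]
    simp [Matrix.adjugate_fin_two, Matrix.det_fin_two_of]
  have hWinv : W⁻¹ = !![α⁻¹, 0; 0, 1] := by
    rw [hW, Matrix.inv_def]
    simp [Matrix.adjugate_fin_two, Matrix.det_fin_two_of, hα0.ne']
  have hApE : Ap = !![1 - 2 * α ^ 2, -2 * α;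
            2 * α ^ 3 + 4 * α ^ 2 - 2, 2 * α ^ 2 + 4 * α + 1] := by
    have ht1 : (!![1, 0; -(α + 2), 1] : Matrix (Fin 2) (Fin 2) ℝ)ᵀ = !![1, -(α + 2); 0, 1] := by
      ext i j; fin_cases i <;> fin_cases j <;> rfl
    have ht2 : (!![1, 0; α, 1] : Matrix (Fin 2) (Fin 2) ℝ)ᵀ = !![1, α; 0, 1] := by
      ext i j; fin_cases i <;> fin_cases j <;> rfl
    rw [hAp, hAtinv, hWinv, hA, hW, ht1, ht2]
    rw [Matrix.mul_fin_two, Matrix.mul_fin_two, Matrix.mul_fin_two, Matrix.mul_fin_two,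
      Matrix.mul_fin_two]
    ext i j
    fin_cases i <;> fin_cases j <;> simp <;> (try field_simp) <;> ring
  refine ⟨hApE, ?_⟩
  set s := Real.sqrt (α * (α + 1)) with hs
  have hs2 : s ^ 2 = α * (α + 1) := Real.sq_sqrt (by nlinarith)
  ext x
  simp only [spectrum.mem_iff, Matrix.isUnit_iff_isUnit_det, isUnit_iff_ne_zero, ne_eq,
    not_not, Set.mem_insert_iff, Set.mem_singleton_iff]
  have hdet : ((algebraMap ℝ (Matrix (Fin 2) (Fin 2) ℝ)) x - Ap).det
      = (x - (1 + 2 * α + 2 * s)) * (x - (1 + 2 * α - 2 * s)) := by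
    rw [hApE]
    simp [Matrix.det_fin_two, Matrix.algebraMap_matrix_apply]
    nlinarith [hs2]
  rw [hdet, mul_eq_zero, sub_eq_zero, sub_eq_zero]
end

section
/- For α ≥ 1, let A = [[1, 0], [α, 1]], W = diag(α, 1), and Ã = [[1, 0], [α + α⁻¹, 1]]. Then A_p = (Ã⁻¹ W Ã⁻ᵀ)(Aᵀ W⁻¹ A) equals [[1 − α, −1], [α² − α⁻¹ + 1, α + α⁻¹ + 1]], its eigenvalues are (2 + α⁻¹ ± √(4α⁻¹ + α⁻²))/2, and both eigenvalues tend to 1 as α → ∞. -/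
/-!
`A_p` has determinant `1` and trace `2 + α⁻¹`, so its eigenvalues are the roots of
`μ² - (2 + α⁻¹) μ + 1`, whose discriminant `4α⁻¹ + α⁻²` tends to `0` as `α → ∞`.
-/

open Matrix

open Polynomial Filter Topology

namespace Matrix

variable {K : Type*} [Field K]

theorem spectrum_fin_two_eq [NeZero (2 : K)] (M : Matrix (Fin 2) (Fin 2) K) {t s : K}
    (ht : M.trace = t) (hs : s * s = t ^ 2 - 4 * M.det) :
    spectrum K M = {(t + s) / 2, (t - s) / 2} := by
  ext μ
  have hdiscrim : discrim 1 (-t) M.det = s * s := by rw [discrim, hs]; ring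
  have hroots := quadratic_eq_zero_iff one_ne_zero hdiscrim μ
  rw [neg_neg, mul_one] at hroots
  rw [mem_spectrum_iff_isRoot_charpoly, charpoly_fin_two, IsRoot.def, ht,
    Set.mem_insert_iff, Set.mem_singleton_iff, ← hroots]
  simp only [eval_add, eval_sub, eval_pow, eval_mul, eval_C, eval_X]
  ring_nf

theorem transpose_fin_two_of {α : Type*} (a b c d : α) : (!![a, b; c, d])ᵀ = !![a, c; b, d] :=
  (transposeᵣ_eq _).symm

theorem inv_lower_unitriangular {R : Type*} [CommRing R] (c : R) :
    (!![1, 0; c, 1])⁻¹ = !![1, 0; -c, 1] :=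
  inv_eq_right_inv <| by simp [one_fin_two]

theorem inv_fin_two_diagonal {a b : K} (ha : a ≠ 0) (hb : b ≠ 0) :
    (!![a, 0; 0, b])⁻¹ = !![a⁻¹, 0; 0, b⁻¹] :=
  inv_eq_right_inv <| by simp [ha, hb, one_fin_two]

end Matrix

theorem preconditioned_matrix_eq {α : ℝ} (hα : α ≠ 0) :
    (!![1, 0; α + α⁻¹, 1]⁻¹ * !![α, 0; 0, 1] * (!![1, 0; α + α⁻¹, 1]⁻¹)ᵀ) *
      (!![1, 0; α, 1]ᵀ * !![α, 0; 0, 1]⁻¹ * !![1, 0; α, 1]) =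
      !![1 - α, -1; α ^ 2 - α⁻¹ + 1, α + α⁻¹ + 1] := by
  rw [inv_lower_unitriangular, inv_fin_two_diagonal hα one_ne_zero, inv_one]
  simp only [transpose_fin_two_of, mul_fin_two, EmbeddingLike.apply_eq_iff_eq, vecCons_inj,
    and_true]
  refine ⟨⟨?_, ?_⟩, ?_, ?_⟩ <;> field_simp <;> ring

theorem spectrum_preconditioned_matrix {α : ℝ} (hα : 0 < α) :
    spectrum ℝ !![1 - α, -1; α ^ 2 - α⁻¹ + 1, α + α⁻¹ + 1] =
      {(2 + α⁻¹ + √(4 * α⁻¹ + α⁻¹ ^ 2)) / 2, (2 + α⁻¹ - √(4 * α⁻¹ + α⁻¹ ^ 2)) / 2} := by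
  refine spectrum_fin_two_eq _ (by rw [trace_fin_two_of]; ring) ?_
  rw [Real.mul_self_sqrt (by positivity), det_fin_two_of]
  field_simp
  ring

theorem tendsto_sqrt_four_mul_inv_add_inv_sq :
    Tendsto (fun α : ℝ => √(4 * α⁻¹ + α⁻¹ ^ 2)) atTop (𝓝 0) := by
  simpa using ((tendsto_inv_atTop_zero.const_mul 4).add (tendsto_inv_atTop_zero.pow 2)).sqrt

/-- for `α ≥ 1`, with `A = [[1,0],[α,1]]`, `W = diag(α,1)` and
`Ã = [[1,0],[α+α⁻¹,1]]`, the matrix `A_p = (Ã⁻¹ W Ã⁻ᵀ)(Aᵀ W⁻¹ A)` equals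
`[[1 − α, −1],[α² − α⁻¹ + 1, α + α⁻¹ + 1]]`, its eigenvalues are
`(2 + α⁻¹ ± √(4α⁻¹ + α⁻²))/2`, and both tend to `1` as `α → ∞`. -/
theorem stmt12 (A W Atil Ap : ℝ → Matrix (Fin 2) (Fin 2) ℝ)
    (hA : ∀ α : ℝ, A α = !![1, 0; α, 1])
    (hW : ∀ α : ℝ, W α = !![α, 0; 0, 1])
    (hAtil : ∀ α : ℝ, Atil α = !![1, 0; α + α⁻¹, 1])
    (hAp : ∀ α : ℝ, Ap α = ((Atil α)⁻¹ * W α * ((Atil α)⁻¹)ᵀ) *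
      ((A α)ᵀ * (W α)⁻¹ * A α)) :
    (∀ α : ℝ, 1 ≤ α →
      Ap α = !![1 - α, -1; α ^ 2 - α⁻¹ + 1, α + α⁻¹ + 1] ∧
      spectrum ℝ (Ap α) =
        {(2 + α⁻¹ + Real.sqrt (4 * α⁻¹ + α⁻¹ ^ 2)) / 2,
         (2 + α⁻¹ - Real.sqrt (4 * α⁻¹ + α⁻¹ ^ 2)) / 2}) ∧
    Filter.Tendsto (fun α : ℝ => (2 + α⁻¹ + Real.sqrt (4 * α⁻¹ + α⁻¹ ^ 2)) / 2)
      Filter.atTop (nhds 1) ∧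
    Filter.Tendsto (fun α : ℝ => (2 + α⁻¹ - Real.sqrt (4 * α⁻¹ + α⁻¹ ^ 2)) / 2)
      Filter.atTop (nhds 1) := by
  have hApEq (α : ℝ) (hα : 1 ≤ α) : Ap α = !![1 - α, -1; α ^ 2 - α⁻¹ + 1, α + α⁻¹ + 1] := by
    rw [hAp, hA, hW, hAtil, preconditioned_matrix_eq (by positivity)]
  have htrace : Tendsto (fun α : ℝ => 2 + α⁻¹) atTop (𝓝 2) := by
    simpa using tendsto_inv_atTop_zero.const_add (2 : ℝ)
  refine ⟨fun α hα => ⟨hApEq α hα, ?_⟩, ?_, ?_⟩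
  · rw [hApEq α hα, spectrum_preconditioned_matrix (by positivity)]
  · simpa using (htrace.add tendsto_sqrt_four_mul_inv_add_inv_sq).div_const 2
  · simpa using (htrace.sub tendsto_sqrt_four_mul_inv_add_inv_sq).div_const 2
end

section
/- Let L be the (N+1)×(N+1) block lower bidiagonal matrix with identity blocks Iₙ on the diagonal and blocks −M_j in position (j+1, j) for j = 1,…,N, and let L̃ be defined analogously with blocks M̃_j. Then E = L L̃⁻¹ − I is block lower triangular with zero diagonal blocks, and for 1 ≤ j < i ≤ N+1 its (i,j) block is E_{i,j} = (M̃_{i−1} − M_{i−1}) M̃_{i−2} ⋯ M̃_j if j < i−1, and E_{i,j} = M̃_{i−1} − M_{i−1} if j = i−1. -/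
open Matrix

def Pprod {n : ℕ} (Mt : ℕ → Matrix (Fin n) (Fin n) ℝ) (i j : ℕ) : Matrix (Fin n) (Fin n) ℝ :=
  ((List.range (i - j)).map fun t => Mt (i - t)).prod

lemma Pr1 {n : ℕ} (Mt : ℕ → Matrix (Fin n) (Fin n) ℝ) {i j : ℕ} (h : j < i) :
    Pprod Mt i j = Mt i * Pprod Mt (i - 1) j := by
  cases i with
  | zero => omega
  | succ m =>
    have hj : j ≤ m := by omega
    have hf : ((fun t => Mt (m + 1 - t)) ∘ Nat.succ) = fun t => Mt (m - t) := by
      funext t; simp [Nat.succ_sub_succ]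
    simp [Pprod, Nat.succ_sub hj, List.range_succ_eq_map, List.map_map, hf]

def Linv {n N : ℕ} (Mt : ℕ → Matrix (Fin n) (Fin n) ℝ) :
    Matrix (Fin (N + 1) × Fin n) (Fin (N + 1) × Fin n) ℝ :=
  fun p q => if (q.1 : ℕ) ≤ (p.1 : ℕ) then Pprod Mt p.1 q.1 p.2 q.2 else 0

lemma mulkey {n N : ℕ} (Mt B : ℕ → Matrix (Fin n) (Fin n) ℝ)
    (A : Matrix (Fin (N + 1) × Fin n) (Fin (N + 1) × Fin n) ℝ)
    (hA : ∀ (i j : Fin (N + 1)) (a b : Fin n),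
      A (i, a) (j, b) = if i = j then (if a = b then 1 else 0)
        else if (i : ℕ) = (j : ℕ) + 1 then -(B (i : ℕ) a b) else 0)
    (i j : Fin (N + 1)) (a b : Fin n) :
    (A * Linv (N := N) Mt) (i, a) (j, b) =
      (if i = j then (if a = b then (1 : ℝ) else 0) else 0) +
      (if (j : ℕ) < (i : ℕ) then
        ((Mt (i : ℕ) - B (i : ℕ)) * Pprod Mt ((i : ℕ) - 1) (j : ℕ)) a b else 0) := by
  have hPI : ∀ k : ℕ, Pprod Mt k k = 1 := by intro k; simp [Pprod]
  rw [Matrix.mul_apply, Fintype.sum_prod_type]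
  have hrow : ∀ k : Fin (N + 1),
      (∑ c : Fin n, A (i, a) (k, c) * Linv (N := N) Mt (k, c) (j, b)) =
      (if k = i then Linv (N := N) Mt (i, a) (j, b) else 0) +
      (if (k : ℕ) + 1 = (i : ℕ) then
        -(∑ c : Fin n, B (i : ℕ) a c * Linv (N := N) Mt (k, c) (j, b)) else 0) := by
    intro k
    by_cases hk : i = k
    · subst hk
      simp [hA, ite_mul, Finset.sum_ite_eq]
    · have hk' : k ≠ i := fun h => hk h.symm
      by_cases hk2 : (i : ℕ) = (k : ℕ) + 1
      · simp [hA, hk, hk', hk2.symm, neg_mul, Finset.sum_neg_distrib]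
      · have hk2' : (k : ℕ) + 1 ≠ (i : ℕ) := fun h => hk2 h.symm
        simp [hA, hk, hk', hk2, hk2']
  simp only [hrow, Finset.sum_add_distrib, Finset.sum_ite_eq', Finset.mem_univ, if_true]
  by_cases hi : (i : ℕ) = 0
  · have hj' : ¬ ((j : ℕ) < (i : ℕ)) := by omega
    have hz : ∀ k : Fin (N + 1), ¬ ((k : ℕ) + 1 = (i : ℕ)) := by intro k; omega
    simp only [hz, if_false, Finset.sum_const_zero, add_zero, hj']
    by_cases hij : i = j
    · subst hij; simp [Linv, hPI, Matrix.one_apply]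
    · have hle : ¬ ((j : ℕ) ≤ (i : ℕ)) := fun h => hij (Fin.ext (by omega))
      simp [Linv, hle, hij]
  · obtain ⟨m, hm⟩ : ∃ m, (i : ℕ) = m + 1 := ⟨(i : ℕ) - 1, by omega⟩
    have hmN : m < N + 1 := by omega
    set i' : Fin (N + 1) := ⟨m, hmN⟩ with hi'
    have hi'v : (i' : ℕ) = m := rfl
    have hcond : ∀ k : Fin (N + 1), ((k : ℕ) + 1 = (i : ℕ)) = (k = i') := by
      intro k; simp only [eq_iff_iff, Fin.ext_iff, hi'v]; constructor <;> omega
    simp only [hcond, Finset.sum_ite_eq', Finset.mem_univ, if_true]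
    by_cases hj : (j : ℕ) < (i : ℕ)
    · have hij : i ≠ j := by intro h; subst h; omega
      have hji' : (j : ℕ) ≤ m := by omega
      have hji : (j : ℕ) ≤ (i : ℕ) := by omega
      have him : (i : ℕ) - 1 = m := by omega
      simp only [Linv, hi'v, hji, hji', if_true, hij, if_false, hj, zero_add, him]
      rw [show (∑ c : Fin n, B (i : ℕ) a c * Pprod Mt m (j : ℕ) c b)
            = (B (i : ℕ) * Pprod Mt m (j : ℕ)) a b from (Matrix.mul_apply).symm]
      have h1 : Pprod Mt (i : ℕ) (j : ℕ) = Mt (i : ℕ) * Pprod Mt m (j : ℕ) := by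
        rw [Pr1 Mt hj, him]
      rw [h1]
      simp [sub_eq_add_neg, Matrix.add_mul, Matrix.neg_mul, Matrix.add_apply, Matrix.neg_apply]
    · have hij2 : ¬ ((j : ℕ) ≤ m) := by omega
      simp only [Linv, hi'v, hij2, if_false, mul_zero, Finset.sum_const_zero, neg_zero,
        add_zero, hj]
      by_cases hij : i = j
      · subst hij; simp [hPI, Matrix.one_apply]
      · have hle : ¬ ((j : ℕ) ≤ (i : ℕ)) := fun h => hij (Fin.ext (by omega))
        simp [hle, hij]


/-- for the block lower bidiagonal matrices `L` (blocks `−M_j`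
below the identity diagonal) and `L̃` (with blocks `−M̃_j`), the error
`E = L L̃⁻¹ − I` is block lower triangular with zero diagonal blocks, and its
strictly lower `(i,j)` block equals `(M̃_{i−1} − M_{i−1}) M̃_{i−2} ⋯ M̃_j`
(in 1-based block numbering; here blocks are numbered from 0, so the block in
row `i`, column `j < i` is `(M̃_i − M_i) M̃_{i−1} ⋯ M̃_{j+1}`). -/
theorem stmt14 {n N : ℕ}
    (M Mt : ℕ → Matrix (Fin n) (Fin n) ℝ)
    (L Lt E : Matrix (Fin (N + 1) × Fin n) (Fin (N + 1) × Fin n) ℝ)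
    (hL : ∀ (i j : Fin (N + 1)) (a b : Fin n),
      L (i, a) (j, b) = if i = j then (if a = b then 1 else 0)
        else if (i : ℕ) = (j : ℕ) + 1 then -(M (i : ℕ) a b) else 0)
    (hLt : ∀ (i j : Fin (N + 1)) (a b : Fin n),
      Lt (i, a) (j, b) = if i = j then (if a = b then 1 else 0)
        else if (i : ℕ) = (j : ℕ) + 1 then -(Mt (i : ℕ) a b) else 0)
    (hE : E = L * Lt⁻¹ - 1) :
    (∀ (i j : Fin (N + 1)), (i : ℕ) ≤ (j : ℕ) →
      ∀ a b : Fin n, E (i, a) (j, b) = 0) ∧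
    (∀ (i j : Fin (N + 1)), (j : ℕ) < (i : ℕ) →
      (Matrix.of fun a b : Fin n => E (i, a) (j, b)) =
        (Mt (i : ℕ) - M (i : ℕ)) *
          (((List.range ((i : ℕ) - 1 - (j : ℕ))).map
            (fun t => Mt ((i : ℕ) - 1 - t))).prod)) := by
  have hinv : Lt * Linv (N := N) Mt = 1 := by
    ext ⟨i, a⟩ ⟨j, b⟩
    rw [mulkey Mt Mt Lt hLt]
    simp [Matrix.one_apply, Prod.ext_iff, ite_and, sub_self]
  have hLtinv : Lt⁻¹ = Linv (N := N) Mt := inv_eq_right_inv hinv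
  subst hE
  rw [hLtinv]
  constructor
  · intro i j hij a b
    rw [Matrix.sub_apply, mulkey Mt M L hL]
    have h1 : ¬ ((j : ℕ) < (i : ℕ)) := by omega
    by_cases h2 : i = j
    · subst h2; simp [Matrix.one_apply, h1]
    · have hne : (i, a) ≠ (j, b) := fun h => h2 (congrArg Prod.fst h)
      simp [Matrix.one_apply_ne hne, h2, h1]
  · intro i j hij
    ext a b
    have h2 : i ≠ j := by intro h; subst h; omega
    have hne : ((i, a) : Fin (N + 1) × Fin n) ≠ (j, b) :=
      fun h => h2 (congrArg Prod.fst h)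
    simp only [Matrix.of_apply, Matrix.sub_apply, mulkey Mt M L hL,
      Matrix.one_apply_ne hne, h2, if_false, hij, if_true, zero_add, sub_zero]
    rfl
end
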